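/- arXiv:0812.4024 — 7 statements merged into one kernel-verified Lean document; each statement's English description precedes it below -/
import Mathlib

section
/- For primes p < q, r with p, q, r pairwise distinct, and for any integer k with -(qr+rp+pq) < k < pqr, the quantity F_k = a_k/p + b_k/q + c_k/r - k/(pqr) is an integer equal to 0, 1, or 2. -/
/-!
Put `S = a_k·qr + b_k·rp + c_k·pq - k`, so that `F_k = S / pqr`. Modulo `p` only the term `a_k·qr`
survives, and it is `≡ k`, so `p ∣ S`; by symmetry `q ∣ S` and `r ∣ S`, hence `F_k` is an integer.
The residue bounds `0 ≤ a_k ≤ p - 1` etc. give `0 ≤ S + k ≤ 3pqr - (qr + rp + pq)`, which together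
with the bounds on `k` force `-pqr < S < 3pqr`.
-/

noncomputable section

/-- `a_k`: the unique residue mod `p` with `a_k·qr ≡ k (mod p)`. -/
def aK (p q r : ℕ) (k : ℤ) : ℕ :=
  ((k : ZMod p) * ((q : ZMod p) * (r : ZMod p))⁻¹).val

/-- `b_k`: the unique residue mod `q` with `b_k·rp ≡ k (mod q)`. -/
def bK (p q r : ℕ) (k : ℤ) : ℕ :=
  ((k : ZMod q) * ((r : ZMod q) * (p : ZMod q))⁻¹).val

/-- `c_k`: the unique residue mod `r` with `c_k·pq ≡ k (mod r)`. -/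
def cK (p q r : ℕ) (k : ℤ) : ℕ :=
  ((k : ZMod r) * ((p : ZMod r) * (q : ZMod r))⁻¹).val

/-- `F_k = a_k/p + b_k/q + c_k/r - k/(pqr)`. -/
def FK (p q r : ℕ) (k : ℤ) : ℚ :=
  (aK p q r k : ℚ) / p + (bK p q r k : ℚ) / q + (cK p q r k : ℚ) / r
    - (k : ℚ) / (p * q * r)

/-- Coefficient `a_{pqr}(n)` of the cyclotomic polynomial `Φ_{pqr}`, zero outside `[0, deg]`. -/
def aC (p q r : ℕ) (n : ℤ) : ℤ :=
  if 0 ≤ n then (Polynomial.cyclotomic (p * q * r) ℤ).coeff n.toNat else 0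

end

lemma bK_eq_aK (p q r : ℕ) (k : ℤ) : bK p q r k = aK q r p k := rfl

lemma cK_eq_aK (p q r : ℕ) (k : ℤ) : cK p q r k = aK r p q k := rfl

/-- The numerator `pqr·F_k`, written through `aK` alone so that it is invariant under rotating
`p, q, r`. -/
def residueSum (p q r : ℕ) (k : ℤ) : ℤ :=
  aK p q r k * (q * r) + aK q r p k * (r * p) + aK r p q k * (p * q) - k

lemma residueSum_rotate (p q r : ℕ) (k : ℤ) : residueSum q r p k = residueSum p q r k := by
  unfold residueSum
  ring

lemma natCast_ne_zero_of_prime_ne {p q : ℕ} (hp : p.Prime) (hq : q.Prime) (h : p ≠ q) :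
    (q : ZMod p) ≠ 0 := by
  rw [Ne, ZMod.natCast_eq_zero_iff, Nat.prime_dvd_prime_iff_eq hp hq]
  exact h

lemma dvd_residueSum {p q r : ℕ} (hp : p.Prime) (hq : q.Prime) (hr : r.Prime)
    (hpq : p ≠ q) (hpr : p ≠ r) (k : ℤ) : (p : ℤ) ∣ residueSum p q r k := by
  have : Fact p.Prime := ⟨hp⟩
  have hqr : (q : ZMod p) * r ≠ 0 :=
    mul_ne_zero (natCast_ne_zero_of_prime_ne hp hq hpq) (natCast_ne_zero_of_prime_ne hp hr hpr)
  rw [← ZMod.intCast_zmod_eq_zero_iff_dvd, residueSum, aK]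
  push_cast [ZMod.natCast_self, ZMod.natCast_zmod_val]
  rw [inv_mul_cancel_right₀ hqr]
  ring

lemma mul_dvd_residueSum {p q r : ℕ} (hp : p.Prime) (hq : q.Prime) (hr : r.Prime)
    (hpq : p ≠ q) (hpr : p ≠ r) (hqr : q ≠ r) (k : ℤ) :
    (p * q * r : ℤ) ∣ residueSum p q r k := by
  have hp' : (p : ℤ) ∣ residueSum p q r k := dvd_residueSum hp hq hr hpq hpr k
  have hq' : (q : ℤ) ∣ residueSum p q r k := by
    rw [← residueSum_rotate]
    exact dvd_residueSum hq hr hp hqr hpq.symm k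
  have hr' : (r : ℤ) ∣ residueSum p q r k := by
    rw [← residueSum_rotate, ← residueSum_rotate]
    exact dvd_residueSum hr hp hq hpr.symm hqr.symm k
  have coprime {m n : ℕ} (hm : m.Prime) (hn : n.Prime) (h : m ≠ n) : IsCoprime (m : ℤ) n :=
    Nat.isCoprime_iff_coprime.mpr ((Nat.coprime_primes hm hn).mpr h)
  exact ((coprime hp hr hpr).mul_left (coprime hq hr hqr)).mul_dvd
    ((coprime hp hq hpq).mul_dvd hp' hq') hr'

lemma FK_eq_residueSum_div {p q r : ℕ} (hp : p ≠ 0) (hq : q ≠ 0) (hr : r ≠ 0) (k : ℤ) :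
    FK p q r k = residueSum p q r k / (p * q * r) := by
  rw [FK, residueSum, bK_eq_aK, cK_eq_aK]
  push_cast
  field_simp

lemma residueSum_add_nonneg (p q r : ℕ) (k : ℤ) : 0 ≤ residueSum p q r k + k := by
  rw [residueSum, sub_add_cancel]
  positivity

lemma residueSum_add_le (p q r : ℕ) [NeZero p] [NeZero q] [NeZero r] (k : ℤ) :
    residueSum p q r k + k ≤ 3 * (p * q * r) - (q * r + r * p + p * q) := by
  have ha : (aK p q r k : ℤ) + 1 ≤ p := by exact_mod_cast ZMod.val_lt _
  have hb : (aK q r p k : ℤ) + 1 ≤ q := by exact_mod_cast ZMod.val_lt _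
  have hc : (aK r p q k : ℤ) + 1 ≤ r := by exact_mod_cast ZMod.val_lt _
  unfold residueSum
  nlinarith [mul_le_mul_of_nonneg_right ha (by positivity : (0 : ℤ) ≤ q * r),
    mul_le_mul_of_nonneg_right hb (by positivity : (0 : ℤ) ≤ r * p),
    mul_le_mul_of_nonneg_right hc (by positivity : (0 : ℤ) ≤ p * q)]

theorem F_mem_zero_one_two
    (p q r : ℕ) (hp : p.Prime) (hq : q.Prime) (hr : r.Prime)
    (hpq : p < q) (hpr : p < r) (hqr : q ≠ r)
    (k : ℤ) (hk1 : -(q * r + r * p + p * q : ℤ) < k) (hk2 : k < (p : ℤ) * q * r) :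
    FK p q r k ∈ ({0, 1, 2} : Set ℚ) := by
  have : NeZero p := ⟨hp.ne_zero⟩
  have : NeZero q := ⟨hq.ne_zero⟩
  have : NeZero r := ⟨hr.ne_zero⟩
  obtain ⟨m, hm⟩ := mul_dvd_residueSum hp hq hr hpq.ne hpr.ne hqr k
  have hpqr : (0 : ℤ) < p * q * r := by
    have := hp.pos; have := hq.pos; have := hr.pos
    positivity
  have hF : FK p q r k = m := by
    rw [FK_eq_residueSum_div hp.ne_zero hq.ne_zero hr.ne_zero, hm]
    push_cast
    exact mul_div_cancel_left₀ _ (by exact_mod_cast hpqr.ne')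
  have hlow := residueSum_add_nonneg p q r k
  have hhigh := residueSum_add_le p q r k
  have hm0 : 0 ≤ m := by nlinarith
  have hm2 : m ≤ 2 := by nlinarith
  interval_cases m <;> simp [hF]
end

section
/- If F_k = 0 then a_k ≤ ⌊k/(qr)⌋, and if F_k = 2 then a_k ≥ ⌈(k + pq + rp)/(qr)⌉. -/
/-!
Clearing denominators, `F_k = m` says `a_k·qr + b_k·rp + c_k·pq = k + m·pqr`. For `m = 0` the
terms `b_k·rp` and `c_k·pq` are nonnegative, so `a_k·qr ≤ k`. For `m = 2` they are at most
`(q - 1)·rp` and `(r - 1)·pq`, so `a_k·qr ≥ k + pq + rp`.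
-/

theorem FK_eq_iff {p q r : ℕ} (hp : p ≠ 0) (hq : q ≠ 0) (hr : r ≠ 0) (k : ℤ) (m : ℚ) :
    FK p q r k = m ↔
      (aK p q r k * q * r + bK p q r k * r * p + cK p q r k * p * q : ℚ) = k + m * p * q * r := by
  unfold FK
  field_simp
  constructor <;> intro h <;> linarith

theorem bK_lt {p q r : ℕ} (hq : q ≠ 0) (k : ℤ) : bK p q r k < q :=
  haveI : NeZero q := ⟨hq⟩
  ZMod.val_lt _

theorem cK_lt {p q r : ℕ} (hr : r ≠ 0) (k : ℤ) : cK p q r k < r :=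
  haveI : NeZero r := ⟨hr⟩
  ZMod.val_lt _

theorem le_floor_of_mul_add_eq {p q r a b c : ℕ} {k : ℤ} (hq : 0 < q) (hr : 0 < r)
    (h : (a * q * r + b * r * p + c * p * q : ℚ) = k) :
    (a : ℤ) ≤ ⌊(k : ℚ) / (q * r)⌋ := by
  rw [Int.le_floor, le_div_iff₀ (by positivity)]
  have hb : (0 : ℚ) ≤ b * r * p := by positivity
  have hc : (0 : ℚ) ≤ c * p * q := by positivity
  push_cast
  linarith

theorem ceil_le_of_mul_add_eq {p q r a b c : ℕ} {k : ℤ} (hq : 0 < q) (hr : 0 < r)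
    (hb : b < q) (hc : c < r) (h : (a * q * r + b * r * p + c * p * q : ℚ) = k + 2 * p * q * r) :
    ⌈((k : ℚ) + p * q + r * p) / (q * r)⌉ ≤ (a : ℤ) := by
  rw [Int.ceil_le, div_le_iff₀ (by positivity)]
  have hb' : (b : ℚ) * (r * p) ≤ (q - 1) * (r * p) := by
    gcongr
    exact le_sub_iff_add_le.mpr (by exact_mod_cast hb)
  have hc' : (c : ℚ) * (p * q) ≤ (r - 1) * (p * q) := by
    gcongr
    exact le_sub_iff_add_le.mpr (by exact_mod_cast hc)
  push_cast
  linarith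

theorem F_zero_two_bounds_general
    (p q r : ℕ) (hp : p.Prime) (hq : q.Prime) (hr : r.Prime)
    (k : ℤ) :
    (FK p q r k = 0 → (aK p q r k : ℤ) ≤ ⌊(k : ℚ) / (q * r)⌋) ∧
    (FK p q r k = 2 → (aK p q r k : ℤ) ≥ ⌈((k : ℚ) + p * q + r * p) / (q * r)⌉) := by
  have hF := FK_eq_iff hp.ne_zero hq.ne_zero hr.ne_zero k
  refine ⟨fun h0 => ?_, fun h2 => ?_⟩
  · have h := (hF 0).mp h0
    simp only [zero_mul, add_zero] at h
    exact le_floor_of_mul_add_eq hq.pos hr.pos h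
  · exact ceil_le_of_mul_add_eq hq.pos hr.pos (bK_lt hq.ne_zero k) (cK_lt hr.ne_zero k)
      ((hF 2).mp h2)

theorem F_zero_two_bounds
    (p q r : ℕ) (hp : p.Prime) (hq : q.Prime) (hr : r.Prime)
    (hpq : p < q) (hpr : p < r) (hqr : q ≠ r)
    (k : ℤ) (hk1 : -(q * r + r * p + p * q : ℤ) < k) (hk2 : k < (p : ℤ) * q * r) :
    (FK p q r k = 0 → (aK p q r k : ℤ) ≤ ⌊(k : ℚ) / (q * r)⌋) ∧
    (FK p q r k = 2 → (aK p q r k : ℤ) ≥ ⌈((k : ℚ) + p * q + r * p) / (q * r)⌉) :=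
  F_zero_two_bounds_general p q r hp hq hr k
end

section
/- F_k - F_{k-q} equals -1 if a_k < r' and c_k < p_r'; equals 1 if a_k ≥ r' and c_k ≥ p_r'; and equals 0 otherwise. Here r' is the inverse of r modulo p (with 0 < r' < p) and p_r' is the inverse of p modulo r (with 0 < p_r' < r). -/
/-!
Replacing `k` by `k - q` leaves `b_k` unchanged and shifts `a_k` by `-r'` modulo `p` and `c_k`
by `-p_r'` modulo `r`. Since `r r' + p p_r' = 1 + p r`, the difference `F_k - F_{k-q}` equals
`(r r' + p p_r' - 1) / (p r) = 1`, minus one for each of the two residues that wraps around,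
i.e. for `a_k < r'` and for `c_k < p_r'`.
-/

namespace ZMod

theorem natCast_ne_zero_of_prime_ne {p q : ℕ} (hp : p.Prime) (hq : q.Prime) (h : p ≠ q) :
    (q : ZMod p) ≠ 0 := by
  rw [Ne, natCast_eq_zero_iff]
  exact fun hpq => h ((Nat.prime_dvd_prime_iff_eq hp hq).mp hpq)

theorem val_sub_add_val {n : ℕ} [NeZero n] (a b : ZMod n) :
    (a - b).val + b.val = a.val + if a.val < b.val then n else 0 := by
  split_ifs with hab
  · refine (val_add_val_of_le ?_).trans (by rw [sub_add_cancel])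
    by_contra! h
    have := val_add_of_lt h
    rw [sub_add_cancel] at this
    omega
  · rw [val_sub (not_lt.mp hab)]
    omega

theorem val_inv_natCast_pos {p r : ℕ} (hp : 1 < p) (h : r.Coprime p) :
    0 < (r : ZMod p)⁻¹.val := by
  have : Fact (1 < p) := ⟨hp⟩
  refine Nat.pos_of_ne_zero fun h0 => ?_
  have := coe_mul_inv_eq_one r h
  rw [(val_eq_zero _).mp h0, mul_zero] at this
  exact zero_ne_one this

theorem mul_val_inv_add_mul_val_inv {p r : ℕ} (hp : 1 < p) (hr : 1 < r) (h : p.Coprime r) :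
    r * (r : ZMod p)⁻¹.val + p * (p : ZMod r)⁻¹.val = 1 + p * r := by
  have : NeZero p := ⟨by omega⟩
  have : NeZero r := ⟨by omega⟩
  set R := (r : ZMod p)⁻¹.val with hR
  set P := (p : ZMod r)⁻¹.val with hP
  have hRp : R < p := val_lt _
  have hPr : P < r := val_lt _
  have hR0 : 0 < R := val_inv_natCast_pos hp h.symm
  have hmod_p : r * R + p * P ≡ 1 + p * r [MOD p] := by
    rw [← natCast_eq_natCast_iff]
    push_cast
    rw [hR, natCast_zmod_val, coe_mul_inv_eq_one r h.symm, natCast_self]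
    ring
  have hmod_r : r * R + p * P ≡ 1 + p * r [MOD r] := by
    rw [← natCast_eq_natCast_iff]
    push_cast
    rw [hP, natCast_zmod_val, coe_mul_inv_eq_one p h, natCast_self]
    ring
  refine ((Nat.modEq_and_modEq_iff_modEq_mul h).mp ⟨hmod_p, hmod_r⟩).eq_of_abs_lt ?_
  have h1 : r ≤ r * R := Nat.le_mul_of_pos_right r hR0
  have h2 : r * R < r * p := Nat.mul_lt_mul_of_pos_left hRp (by omega)
  have h3 : p * P < p * r := Nat.mul_lt_mul_of_pos_left hPr (by omega)
  rw [mul_comm r p] at h2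
  rw [abs_sub_lt_iff]
  push_cast
  constructor <;> omega

end ZMod

section ShiftByQ

variable (p q r : ℕ) (k : ℤ)

theorem bK_sub_q : bK p q r (k - q) = bK p q r k := by
  simp [bK]

theorem aK_sub_q_add_val_inv [Fact p.Prime] (hq : (q : ZMod p) ≠ 0) :
    aK p q r (k - q) + (r : ZMod p)⁻¹.val =
      aK p q r k + if aK p q r k < (r : ZMod p)⁻¹.val then p else 0 := by
  have hshift : aK p q r (k - q) = ((aK p q r k : ZMod p) - (r : ZMod p)⁻¹).val := by
    rw [aK, aK, ZMod.natCast_zmod_val]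
    congr 1
    push_cast
    field_simp
  have := ZMod.val_sub_add_val (aK p q r k : ZMod p) (r : ZMod p)⁻¹
  rwa [ZMod.val_cast_of_lt (show aK p q r k < p from ZMod.val_lt _), ← hshift] at this

theorem cK_sub_q_add_val_inv [Fact r.Prime] (hq : (q : ZMod r) ≠ 0) :
    cK p q r (k - q) + (p : ZMod r)⁻¹.val =
      cK p q r k + if cK p q r k < (p : ZMod r)⁻¹.val then r else 0 := by
  have hshift : cK p q r (k - q) = ((cK p q r k : ZMod r) - (p : ZMod r)⁻¹).val := by
    rw [cK, cK, ZMod.natCast_zmod_val]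
    congr 1
    push_cast
    field_simp
  have := ZMod.val_sub_add_val (cK p q r k : ZMod r) (p : ZMod r)⁻¹
  rwa [ZMod.val_cast_of_lt (show cK p q r k < r from ZMod.val_lt _), ← hshift] at this

theorem FK_sub_FK_sub_q (hp : p.Prime) (hq : q.Prime) (hr : r.Prime)
    (hpq : p ≠ q) (hpr : p ≠ r) (hqr : q ≠ r) :
    FK p q r k - FK p q r (k - q) =
      1 - (if aK p q r k < (r : ZMod p)⁻¹.val then 1 else 0)
        - (if cK p q r k < (p : ZMod r)⁻¹.val then 1 else 0) := by
  have : Fact p.Prime := ⟨hp⟩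
  have : Fact r.Prime := ⟨hr⟩
  rw [FK, FK, bK_sub_q]
  have hA := aK_sub_q_add_val_inv p q r k (ZMod.natCast_ne_zero_of_prime_ne hp hq hpq)
  have hC := cK_sub_q_add_val_inv p q r k (ZMod.natCast_ne_zero_of_prime_ne hr hq hqr.symm)
  have key :=
    ZMod.mul_val_inv_add_mul_val_inv hp.one_lt hr.one_lt ((Nat.coprime_primes hp hr).mpr hpr)
  set A := aK p q r k
  set C := cK p q r k
  set R := (r : ZMod p)⁻¹.val
  set P := (p : ZMod r)⁻¹.val
  have hA' := congrArg (Nat.cast (R := ℚ)) hA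
  have hC' := congrArg (Nat.cast (R := ℚ)) hC
  push_cast at hA' hC'
  rw [← mul_boole] at hA' hC'
  have keyQ : (r * R + p * P : ℚ) = 1 + p * r := by exact_mod_cast key
  have hp0 : (p : ℚ) ≠ 0 := by exact_mod_cast hp.ne_zero
  have hq0 : (q : ℚ) ≠ 0 := by exact_mod_cast hq.ne_zero
  have hr0 : (r : ℚ) ≠ 0 := by exact_mod_cast hr.ne_zero
  rw [eq_sub_of_add_eq hA', eq_sub_of_add_eq hC']
  field_simp
  push_cast
  linear_combination (q : ℚ) * keyQ

theorem F_diff_q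
    (p q r : ℕ) (hp : p.Prime) (hq : q.Prime) (hr : r.Prime)
    (hpq : p < q) (hpr : p < r) (hqr : q ≠ r) (k : ℤ) :
    FK p q r k - FK p q r (k - q) =
      if aK p q r k < ((r : ZMod p)⁻¹).val ∧ cK p q r k < ((p : ZMod r)⁻¹).val then -1
      else if ((r : ZMod p)⁻¹).val ≤ aK p q r k ∧ ((p : ZMod r)⁻¹).val ≤ cK p q r k then 1
      else 0 := by
  rw [FK_sub_FK_sub_q p q r k hp hq hr hpq.ne hpr.ne hqr]
  split_ifs <;> norm_num <;> omega
end ShiftByQ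
end

section
/- The value of F_k - F_{k-q} - F_{k-r} + F_{k-q-r} depends only on k modulo p; in particular F_k + F_{k-p-q} + F_{k-q-r} + F_{k-r-p} = F_{k-p} + F_{k-q} + F_{k-r} + F_{k-p-q-r} for every integer k. -/
/-!
Each of `a_k`, `b_k`, `c_k` depends only on the residue of `k` modulo `p`, `q`, `r` respectively.
In the second difference `F_k - F_{k-q} - F_{k-r} + F_{k-q-r}` the `b`-terms cancel in pairs
(they are `q`-periodic), so do the `c`-terms (`r`-periodic) and the linear terms `k/(pqr)`,
leaving an alternating sum of `a`-terms divided by `p`, which only sees `k` modulo `p`.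
The second identity is the first one applied to `k` and `k - p`.
-/

section

variable (p q r : ℕ)

lemma aK_congr {k j : ℤ} (h : (k : ZMod p) = j) : aK p q r k = aK p q r j := by
  rw [aK, aK, h]

lemma bK_congr {k j : ℤ} (h : (k : ZMod q) = j) : bK p q r k = bK p q r j := by
  rw [bK, bK, h]

lemma cK_congr {k j : ℤ} (h : (k : ZMod r) = j) : cK p q r k = cK p q r j := by
  rw [cK, cK, h]

lemma bK_sub_self (k : ℤ) : bK p q r (k - q) = bK p q r k :=
  bK_congr p q r (by simp)

lemma cK_sub_self (k : ℤ) : cK p q r (k - r) = cK p q r k :=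
  cK_congr p q r (by simp)

lemma FK_second_difference_eq (k : ℤ) :
    FK p q r k - FK p q r (k - q) - FK p q r (k - r) + FK p q r (k - q - r) =
      ((aK p q r k : ℚ) - aK p q r (k - q) - aK p q r (k - r) + aK p q r (k - q - r)) / p := by
  have hb : bK p q r (k - q - r) = bK p q r (k - r) := by
    rw [sub_right_comm, bK_sub_self]
  simp only [FK, bK_sub_self, cK_sub_self, hb]
  push_cast
  ring

lemma FK_second_difference_congr {k j : ℤ} (h : (k : ZMod p) = j) :
    FK p q r k - FK p q r (k - q) - FK p q r (k - r) + FK p q r (k - q - r) =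
      FK p q r j - FK p q r (j - q) - FK p q r (j - r) + FK p q r (j - q - r) := by
  have hsub (m : ℕ) {k j : ℤ} (h : (k : ZMod p) = j) : ((k - m : ℤ) : ZMod p) = (j - m : ℤ) := by
    push_cast; rw [h]
  rw [FK_second_difference_eq, FK_second_difference_eq, aK_congr p q r h,
    aK_congr p q r (hsub q h), aK_congr p q r (hsub r h), aK_congr p q r (hsub r (hsub q h))]

end

theorem F_second_difference_periodic_general
    (p q r : ℕ) :
    (∀ k j : ℤ, (k : ZMod p) = (j : ZMod p) →
      FK p q r k - FK p q r (k - q) - FK p q r (k - r) + FK p q r (k - q - r) =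
      FK p q r j - FK p q r (j - q) - FK p q r (j - r) + FK p q r (j - q - r)) ∧
    (∀ k : ℤ,
      FK p q r k + FK p q r (k - p - q) + FK p q r (k - q - r) + FK p q r (k - r - p) =
      FK p q r (k - p) + FK p q r (k - q) + FK p q r (k - r) + FK p q r (k - p - q - r)) := by
  refine ⟨fun k j h => FK_second_difference_congr p q r h, fun k => ?_⟩
  have h := FK_second_difference_congr p q r (k := k) (j := k - p) (by simp)
  rw [show k - (r : ℤ) - p = k - p - r by ring]
  linarith

theorem F_second_difference_periodic
    (p q r : ℕ) (hp : p.Prime) (hq : q.Prime) (hr : r.Prime)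
    (hpq : p < q) (hpr : p < r) (hqr : q ≠ r) :
    (∀ k j : ℤ, (k : ZMod p) = (j : ZMod p) →
      FK p q r k - FK p q r (k - q) - FK p q r (k - r) + FK p q r (k - q - r) =
      FK p q r j - FK p q r (j - q) - FK p q r (j - r) + FK p q r (j - q - r)) ∧
    (∀ k : ℤ,
      FK p q r k + FK p q r (k - p - q) + FK p q r (k - q - r) + FK p q r (k - r - p) =
      FK p q r (k - p) + FK p q r (k - q) + FK p q r (k - r) + FK p q r (k - p - q - r)) :=
  F_second_difference_periodic_general p q r
end

section
/- For any odd prime p and any integer k with 0 ≤ k ≤ (p-1)/2, the sum over i = 1 to k of min{3i - k + (p-1)/2, k - i + (p+1)/2} equals (p+1)k/2. -/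
/-!
Write `p = 2a + 1`. Then the `i`-th summand is `a + min (3i - k) (k - i + 1)`, and the sum
`S k = ∑_{i=1}^k min (3i - k) (k - i + 1)` equals `k`: passing from `k` to `k + 2`, the inner
summands `i = 2, …, k + 1` are those of `S k` shifted by one, each increased by `1`, while the
two new end summands `1 - k` and `1` contribute `2 - k`; hence `S (k + 2) = S k + 2`.
-/

open Finset

lemma sum_Icc_one_eq_sum_range {M : Type*} [AddCommMonoid M] (g : ℤ → M) (n : ℕ) :
    ∑ i ∈ Icc (1 : ℤ) n, g i = ∑ j ∈ range n, g (j + 1) := by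
  rw [Int.Icc_eq_finset_map, sum_map]
  simp [add_comm]

lemma sum_range_min_shifted (a : ℤ) (n : ℕ) :
    ∑ j ∈ range n, min (3 * ((j : ℤ) + 1) - n + a) (n - ((j : ℤ) + 1) + (a + 1)) =
      (a + 1) * n := by
  induction n using Nat.twoStepInduction with
  | zero => simp
  | one => simp
  | more n ih _ =>
    have inner : ∀ j ∈ range n,
        min (3 * (((j + 1 : ℕ) : ℤ) + 1) - ↑(n + 2) + a)
            (↑(n + 2) - (((j + 1 : ℕ) : ℤ) + 1) + (a + 1))
          = min (3 * ((j : ℤ) + 1) - n + a) (n - ((j : ℤ) + 1) + (a + 1)) + 1 := by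
      intro j _
      push_cast
      omega
    rw [sum_range_succ, sum_range_succ', sum_congr rfl inner, sum_add_distrib, ih]
    push_cast
    simp only [sum_const, card_range, nsmul_eq_mul]
    rw [min_eq_left (by omega), min_eq_right (by omega)]
    ring

lemma sum_Icc_min (a : ℤ) (n : ℕ) :
    ∑ i ∈ Icc (1 : ℤ) n, min (3 * i - n + a) (n - i + (a + 1)) = (a + 1) * n := by
  rw [sum_Icc_one_eq_sum_range, sum_range_min_shifted]

theorem sum_min_eq_general
    (p : ℕ) (hodd : Odd p)
    (k : ℤ) (hk0 : 0 ≤ k) :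
    ∑ i ∈ Finset.Icc 1 k,
        min (3 * i - k + ((p : ℤ) - 1) / 2) (k - i + ((p : ℤ) + 1) / 2)
      = ((p : ℤ) + 1) * k / 2 := by
  obtain ⟨a, rfl⟩ := hodd
  lift k to ℕ using hk0
  have half_pred : ((↑(2 * a + 1) : ℤ) - 1) / 2 = a := by omega
  have half_succ : ((↑(2 * a + 1) : ℤ) + 1) / 2 = a + 1 := by omega
  have rhs : ((↑(2 * a + 1) : ℤ) + 1) * k / 2 = (a + 1) * k := by
    push_cast
    rw [show (2 * (a : ℤ) + 1 + 1) * k = (a + 1) * k * 2 by ring,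
      Int.mul_ediv_cancel _ two_ne_zero]
  rw [half_pred, half_succ, rhs, sum_Icc_min]

theorem sum_min_eq
    (p : ℕ) (hp : p.Prime) (hodd : Odd p)
    (k : ℤ) (hk0 : 0 ≤ k) (hk : k ≤ ((p : ℤ) - 1) / 2) :
    ∑ i ∈ Finset.Icc 1 k,
        min (3 * i - k + ((p : ℤ) - 1) / 2) (k - i + ((p : ℤ) + 1) / 2)
      = ((p : ℤ) + 1) * k / 2 :=
  sum_min_eq_general p hodd k hk0
end

section
/- For the rational formal power series identity, Φ_{pqr}(x) ≡ (1-x^q)(1-x^r)(1+x+...+x^{p-1}) · Σ_{a,b,c ≥ 0} x^{aqr+brp+cpq} (mod x^{pqr}), i.e., the coefficients of both sides agree in all degrees less than pqr. -/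
/-!
For a prime `p ∤ n`, `Φ_n(X^p) = Φ_{np}(X) Φ_n(X)`. Starting from `Φ_p (X - 1) = X^p - 1` and
applying this with `q` and then `r` yields
`Φ_{pqr} (1-X^{qr})(1-X^{rp})(1-X^{pq})(1-X) = (1-X^{pqr})(1-X^p)(1-X^q)(1-X^r)`,
and `(1 - X^p) / (1 - X) = 1 + X + ⋯ + X^{p-1}`.
The counting series is the product of the geometric series `1 / (1 - X^k)` for `k = qr, rp, pq`,
so the right-hand side of the congruence is `Φ_{pqr} / (1 - X^{pqr})`, which agrees with
`Φ_{pqr}` below degree `pqr`.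
-/

open PowerSeries

namespace Polynomial

variable {R : Type*} [CommRing R]

theorem cyclotomic_mul_prime_mul_eq_expand_mul {p n : ℕ} (hp : p.Prime) (hn : ¬p ∣ n)
    {A B : R[X]} (h : cyclotomic n R * A = B) :
    cyclotomic (n * p) R * (B * expand R p A) = expand R p B * A := by
  rw [← h, map_mul, cyclotomic_expand_eq_cyclotomic_mul hp hn]
  ring

theorem expand_X_pow_sub_one (k d : ℕ) : expand R k (X ^ d - 1) = X ^ (d * k) - 1 := by
  rw [map_sub, map_one, map_pow, expand_X, ← pow_mul, mul_comm]

theorem cyclotomic_three_primes_mul_eq {p q r : ℕ} (hp : p.Prime) (hq : q.Prime) (hr : r.Prime)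
    (hpq : p ≠ q) (hpr : p ≠ r) (hqr : q ≠ r) :
    cyclotomic (p * q * r) R * ((1 - X ^ (q * r)) * (1 - X ^ (r * p)) * (1 - X ^ (p * q))) =
      (1 - X ^ (p * q * r)) * ((1 - X ^ q) * (1 - X ^ r) * ∑ i ∈ Finset.range p, X ^ i) := by
  have : Fact p.Prime := ⟨hp⟩
  have hq_ndvd : ¬q ∣ p := fun h => hpq ((Nat.prime_dvd_prime_iff_eq hq hp).mp h).symm
  have hr_ndvd : ¬r ∣ p * q := by
    rw [hr.dvd_mul, Nat.prime_dvd_prime_iff_eq hr hp, Nat.prime_dvd_prime_iff_eq hr hq]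
    rintro (h | h)
    exacts [hpr h.symm, hqr h.symm]
  have h_p : cyclotomic p R * (X ^ 1 - 1) = X ^ p - 1 := by
    simpa using cyclotomic_prime_mul_X_sub_one R p
  have h_pqr := cyclotomic_mul_prime_mul_eq_expand_mul hr hr_ndvd
    (cyclotomic_mul_prime_mul_eq_expand_mul hq hq_ndvd h_p)
  simp only [map_mul, expand_X_pow_sub_one] at h_pqr
  -- `Φ_{pqr} (X^{pq}-1)(X-1)(X^{pr}-1)(X^{qr}-1) = (X^{pqr}-1)(X^r-1)(X^p-1)(X^q-1)`
  apply (monic_X_sub_C (1 : R)).isRegular.right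
  simp only [map_one]
  linear_combination
    -h_pqr - (1 - X ^ (p * q * r)) * (1 - X ^ q) * (1 - X ^ r) * geom_sum_mul (X : R[X]) p

end Polynomial

namespace PowerSeries

variable {R : Type*} [CommRing R]

theorem coeff_eq_of_mul_eq_one_sub_X_pow_mul {f g u v : R⟦X⟧} {N n : ℕ} (huv : u * v = 1)
    (hf : f * v = (1 - X ^ N) * g) (hn : n < N) : coeff n f = coeff n (g * u) := by
  have hfg : f = (1 - X ^ N) * (g * u) := by linear_combination (-f) * huv + u * hf
  rw [hfg, sub_mul, one_mul, map_sub, coeff_X_pow_mul', if_neg (by omega), sub_zero]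

theorem expand_mk_one_mul_one_sub_X_pow (k : ℕ) (hk : k ≠ 0) :
    expand k hk (mk 1 : R⟦X⟧) * (1 - X ^ k) = 1 := by
  simpa [expand_X] using congrArg (expand k hk) (mk_one_mul_one_sub_eq_one R)

open Finset

variable (R) in
noncomputable def denumerantSeries (a b c : ℕ) : R⟦X⟧ :=
  mk fun m => #{t ∈ range (m + 1) ×ˢ range (m + 1) ×ˢ range (m + 1) |
    t.1 * a + t.2.1 * b + t.2.2 * c = m}

theorem denumerantSeries_eq_expand_mk_one_mul {a b c : ℕ} (ha : a ≠ 0) (hb : b ≠ 0)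
    (hc : c ≠ 0) :
    denumerantSeries R a b c =
      expand a ha (mk 1) * (expand b hb (mk 1) * expand c hc (mk 1)) := by
  ext m
  simp only [denumerantSeries, coeff_mk, coeff_mul, coeff_expand, Pi.one_apply, mul_sum, ite_mul,
    mul_ite, one_mul, mul_zero, zero_mul, ← ite_and]
  rw [sum_sigma', sum_boole]
  congr 1
  have ha' := Nat.pos_of_ne_zero ha
  have hb' := Nat.pos_of_ne_zero hb
  have hc' := Nat.pos_of_ne_zero hc
  refine card_nbij' (fun t => ⟨(t.1 * a, t.2.1 * b + t.2.2 * c), (t.2.1 * b, t.2.2 * c)⟩)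
    (fun x => (x.1.1 / a, x.2.1 / b, x.2.2 / c)) ?_ ?_ ?_ ?_
  · rintro ⟨x, y, z⟩ h
    simp only [coe_filter, mem_product, mem_range, Set.mem_ofPred_eq] at h
    simp only [coe_filter, mem_sigma, HasAntidiagonal.mem_antidiagonal, dvd_mul_left, and_self,
      and_true, Set.mem_ofPred_eq]
    omega
  · rintro ⟨⟨_, _⟩, _, _⟩ h
    simp only [coe_filter, mem_sigma, HasAntidiagonal.mem_antidiagonal, Set.mem_ofPred_eq] at h
    obtain ⟨⟨rfl, rfl⟩, ⟨⟨z, rfl⟩, ⟨y, rfl⟩⟩, ⟨x, rfl⟩⟩ := h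
    rw [mul_comm a x, mul_comm b y, mul_comm c z]
    simp only [coe_filter, mem_product, mem_range, Set.mem_ofPred_eq, Nat.mul_div_cancel _ ha',
      Nat.mul_div_cancel _ hb', Nat.mul_div_cancel _ hc']
    have := Nat.le_mul_of_pos_right x ha'
    have := Nat.le_mul_of_pos_right y hb'
    have := Nat.le_mul_of_pos_right z hc'
    omega
  · rintro ⟨x, y, z⟩ -
    simp [Nat.mul_div_cancel _ ha', Nat.mul_div_cancel _ hb', Nat.mul_div_cancel _ hc']
  · rintro ⟨⟨_, _⟩, _, _⟩ h
    simp only [coe_filter, mem_sigma, HasAntidiagonal.mem_antidiagonal, Set.mem_ofPred_eq] at h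
    obtain ⟨⟨rfl, rfl⟩, ⟨⟨z, rfl⟩, ⟨y, rfl⟩⟩, ⟨x, rfl⟩⟩ := h
    rw [mul_comm a x, mul_comm b y, mul_comm c z]
    simp [Nat.mul_div_cancel _ ha', Nat.mul_div_cancel _ hb', Nat.mul_div_cancel _ hc']

theorem denumerantSeries_mul_prod_one_sub_X_pow {a b c : ℕ} (ha : a ≠ 0) (hb : b ≠ 0)
    (hc : c ≠ 0) :
    denumerantSeries R a b c * ((1 - X ^ a) * (1 - X ^ b) * (1 - X ^ c)) = 1 := by
  rw [denumerantSeries_eq_expand_mk_one_mul ha hb hc]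
  calc _ = (expand a ha (mk 1) * (1 - X ^ a)) * (expand b hb (mk 1) * (1 - X ^ b)) *
        (expand c hc (mk 1 : R⟦X⟧) * (1 - X ^ c)) := by ring
    _ = 1 := by simp only [expand_mk_one_mul_one_sub_X_pow, mul_one]

end PowerSeries

theorem cyclotomic_series_congruence
    (p q r : ℕ) (hp : p.Prime) (hq : q.Prime) (hr : r.Prime)
    (hpq : p < q) (hpr : p < r) (hqr : q ≠ r) :
    ∀ n < p * q * r,
      (Polynomial.cyclotomic (p * q * r) ℤ).coeff n =
        PowerSeries.coeff (R := ℤ) n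
          (((1 : ℤ⟦X⟧) - X ^ q) * (1 - X ^ r) * (∑ i ∈ Finset.range p, X ^ i) *
            PowerSeries.mk fun m =>
              (((Finset.range (m + 1) ×ˢ Finset.range (m + 1) ×ˢ Finset.range (m + 1)).filter
                  fun t => t.1 * (q * r) + t.2.1 * (r * p) + t.2.2 * (p * q) = m).card : ℤ)) := by
  intro n hn
  rw [← Polynomial.coeff_coe]
  refine coeff_eq_of_mul_eq_one_sub_X_pow_mul (denumerantSeries_mul_prod_one_sub_X_pow
    (mul_ne_zero hq.ne_zero hr.ne_zero) (mul_ne_zero hr.ne_zero hp.ne_zero)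
    (mul_ne_zero hp.ne_zero hq.ne_zero)) ?_ hn
  have h := congrArg Polynomial.coeToPowerSeries.ringHom
    (Polynomial.cyclotomic_three_primes_mul_eq (R := ℤ) hp hq hr hpq.ne hpr.ne hqr)
  simpa only [map_mul, map_sub, map_pow, map_one, map_sum, Polynomial.coe_X,
    Polynomial.coeToPowerSeries.ringHom_apply] using h
end

section
/- For 0 ≤ k ≤ deg Φ_{pqr} there is at most one triple of nonnegative integers (a, b, c) with k = a·qr + b·rp + c·pq, and such a triple exists if and only if F_k = 0 (in which case a = a_k, b = b_k, c = c_k). -/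
/-! Reducing `k = a·qr + b·rp + c·pq` modulo `p` kills the last two terms, so `a ≡ k·(qr)⁻¹`;
the bound `k ≤ (p-1)(q-1)(r-1) < (p-1)·qr` forces `a < p`, hence `a = a_k`, and likewise for
`b` and `c`. Clearing denominators in `F_k` shows that `F_k = 0` says exactly that
`(a_k, b_k, c_k)` itself represents `k`. -/

lemma val_mul_inv_eq_of_eq_mul {n a : ℕ} (ha : a < n) {x m : ZMod n} (hm : IsUnit m)
    (hx : x = a * m) : (x * m⁻¹).val = a := by
  rw [hx, mul_assoc, ZMod.mul_inv_of_unit m hm, mul_one, ZMod.val_cast_of_lt ha]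

lemma lt_of_mul_le_mul_pred_mul_pred {p q r a : ℕ} (hp : 0 < p) (hq : 0 < q) (hr : 0 < r)
    (h : a * (q * r) ≤ (p - 1) * (q - 1) * (r - 1)) : a < p := by
  have hle : (p - 1) * (q - 1) * (r - 1) ≤ (p - 1) * (q * r) := by
    rw [mul_assoc]
    exact Nat.mul_le_mul_left _ (Nat.mul_le_mul (Nat.sub_le q 1) (Nat.sub_le r 1))
  have := Nat.le_of_mul_le_mul_right (h.trans hle) (Nat.mul_pos hq hr)
  omega

/-- Since `bK p q r = aK q r p` and `cK p q r = aK r p q` hold by `rfl`, this identifies all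
three coefficients. -/
theorem eq_aK_of_eq_add {p q r a b c k : ℕ} (hp : 0 < p) (hq : 0 < q) (hr : 0 < r)
    (hcop : Nat.Coprime (q * r) p) (hk : k ≤ (p - 1) * (q - 1) * (r - 1))
    (h : k = a * (q * r) + b * (r * p) + c * (p * q)) : a = aK p q r k := by
  have ha : a < p := lt_of_mul_le_mul_pred_mul_pred hp hq hr (by omega)
  have hunit : IsUnit ((q : ZMod p) * r) := by
    simpa using (ZMod.unitOfCoprime (q * r) hcop).isUnit
  refine (val_mul_inv_eq_of_eq_mul ha hunit ?_).symm
  rw [Int.cast_natCast, h]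
  simp

theorem FK_eq_zero_iff {p q r : ℕ} (hp : p ≠ 0) (hq : q ≠ 0) (hr : r ≠ 0) (k : ℤ) :
    FK p q r k = 0 ↔
      (aK p q r k : ℤ) * (q * r) + bK p q r k * (r * p) + cK p q r k * (p * q) = k := by
  have hp' : (p : ℚ) ≠ 0 := Nat.cast_ne_zero.mpr hp
  have hq' : (q : ℚ) ≠ 0 := Nat.cast_ne_zero.mpr hq
  have hr' : (r : ℚ) ≠ 0 := Nat.cast_ne_zero.mpr hr
  rw [FK, sub_eq_zero, ← @Int.cast_inj ℚ]
  push_cast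
  constructor
  · intro h
    field_simp at h
    linear_combination h
  · intro h
    field_simp
    linear_combination h

theorem representation_iff_F_zero
    (p q r : ℕ) (hp : p.Prime) (hq : q.Prime) (hr : r.Prime)
    (hpq : p < q) (hpr : p < r) (hqr : q ≠ r)
    (k : ℕ) (hk : k ≤ (p - 1) * (q - 1) * (r - 1)) :
    ((∃ a b c : ℕ, k = a * (q * r) + b * (r * p) + c * (p * q)) ↔ FK p q r k = 0) ∧
    (∀ a b c : ℕ, k = a * (q * r) + b * (r * p) + c * (p * q) →
      a = aK p q r k ∧ b = bK p q r k ∧ c = cK p q r k) := by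
  have coprime {x y : ℕ} (hx : x.Prime) (hy : y.Prime) (hxy : x ≠ y) : x.Coprime y :=
    (Nat.coprime_primes hx hy).mpr hxy
  have unique (a b c : ℕ) (h : k = a * (q * r) + b * (r * p) + c * (p * q)) :
      a = aK p q r k ∧ b = bK p q r k ∧ c = cK p q r k :=
    ⟨eq_aK_of_eq_add hp.pos hq.pos hr.pos
        ((coprime hq hp hpq.ne').mul_left (coprime hr hp hpr.ne')) hk h,
      eq_aK_of_eq_add (b := c) (c := a) hq.pos hr.pos hp.pos
        ((coprime hr hq hqr.symm).mul_left (coprime hp hq hpq.ne)) (by linarith) (by linarith),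
      eq_aK_of_eq_add (b := a) (c := b) hr.pos hp.pos hq.pos
        ((coprime hp hr hpr.ne).mul_left (coprime hq hr hqr)) (by linarith) (by linarith)⟩
  have hF : FK p q r k = 0 ↔
      aK p q r k * (q * r) + bK p q r k * (r * p) + cK p q r k * (p * q) = k := by
    rw [FK_eq_zero_iff hp.ne_zero hq.ne_zero hr.ne_zero]
    exact_mod_cast Iff.rfl
  refine ⟨⟨fun ⟨a, b, c, h⟩ => ?_, fun h => ⟨_, _, _, (hF.mp h).symm⟩⟩, unique⟩
  obtain ⟨rfl, rfl, rfl⟩ := unique a b c h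
  exact hF.mpr h.symm
end
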